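/- Let v = 1, μ > 0 and s ∈ ℝ. Then the equation (1 − Φ(x)) / (Φ_{μ,1}(s) − Φ_{μ,1}(x)) = N(x) / N_{μ,1}(x) has a unique real solution β_{μ,1,s}, and this solution satisfies β_{μ,1,s} < s. -/

import Mathlib

/-!
For `x < s` the denominator is positive, and multiplying through by
`N_{μ,1}(x) / N(x) = exp (μ x - μ² / 2)` turns the equation into `H(x) = 0`, where
`H(x) = (1 - Φ(x)) exp (μ x - μ² / 2) - (Φ_{μ,1}(s) - Φ_{μ,1}(x))`.
In `H'` the two Gaussian densities cancel for the same reason, leaving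
`H'(x) = μ (1 - Φ(x)) exp (μ x - μ² / 2) > 0`. Since `H(s) > 0` and `H → -Φ_{μ,1}(s) < 0` at `-∞`,
`H` has exactly one zero, and it lies below `s`. For `x ≥ s` the left-hand side is `≤ 0` while
the right-hand side is positive.
-/

open MeasureTheory

/-- Density of the normal distribution with mean `μ` and variance `v`. -/
noncomputable def nPDF (μ v x : ℝ) : ℝ :=
  (Real.sqrt (2 * Real.pi * v))⁻¹ * Real.exp (-(x - μ) ^ 2 / (2 * v))

/-- Cumulative distribution function of the normal distribution with mean `μ`
and variance `v`. -/
noncomputable def nCDF (μ v x : ℝ) : ℝ := ∫ t in Set.Iic x, nPDF μ v t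

open Real Set Filter Topology ProbabilityTheory

theorem hasDerivAt_integral_Iic {E : Type*} [NormedAddCommGroup E] [NormedSpace ℝ E]
    [CompleteSpace E] {f : ℝ → E} (hfi : Integrable f) (hfc : Continuous f) (x : ℝ) :
    HasDerivAt (fun u => ∫ t in Iic u, f t) (f x) x := by
  have hsplit :
      (fun u => ∫ t in Iic u, f t) = fun u => (∫ t in Iic 0, f t) + ∫ t in (0)..u, f t := by
    ext u
    rw [← intervalIntegral.integral_Iic_sub_Iic hfi.integrableOn hfi.integrableOn, add_sub_cancel]
  rw [hsplit]
  exact (hfc.integral_hasStrictDerivAt 0 x).hasDerivAt.const_add _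

theorem nPDF_eq_gaussianPDFReal (μ v : ℝ) : nPDF μ v = gaussianPDFReal μ v.toNNReal := by
  ext x
  rcases le_or_gt 0 v with hv | hv
  · simp [nPDF, gaussianPDFReal, Real.coe_toNNReal _ hv]
  · have : 2 * π * v ≤ 0 := by nlinarith [pi_pos]
    simp [nPDF, Real.toNNReal_of_nonpos hv.le, Real.sqrt_eq_zero_of_nonpos this]

theorem integrable_nPDF (μ v : ℝ) : Integrable (nPDF μ v) := by
  rw [nPDF_eq_gaussianPDFReal]
  exact integrable_gaussianPDFReal _ _

theorem continuous_nPDF (μ v : ℝ) : Continuous (nPDF μ v) := by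
  unfold nPDF
  fun_prop

theorem hasDerivAt_nCDF (μ v x : ℝ) : HasDerivAt (nCDF μ v) (nPDF μ v x) x :=
  hasDerivAt_integral_Iic (integrable_nPDF μ v) (continuous_nPDF μ v) x

theorem tendsto_nCDF_atBot (μ v : ℝ) : Tendsto (nCDF μ v) atBot (𝓝 0) :=
  tendsto_integral_Iic_zero tendsto_id

section

variable {μ v : ℝ}

theorem nPDF_pos (hv : 0 < v) (x : ℝ) : 0 < nPDF μ v x := by
  rw [nPDF_eq_gaussianPDFReal]
  exact gaussianPDFReal_pos _ _ _ (by simpa using hv)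

theorem integral_nPDF (hv : 0 < v) : ∫ x, nPDF μ v x = 1 := by
  rw [nPDF_eq_gaussianPDFReal]
  exact integral_gaussianPDFReal_eq_one _ (by simpa using hv)

theorem strictMono_nCDF (hv : 0 < v) : StrictMono (nCDF μ v) :=
  strictMono_of_deriv_pos fun x => (hasDerivAt_nCDF μ v x).deriv ▸ nPDF_pos hv x

theorem nCDF_nonneg (hv : 0 < v) (x : ℝ) : 0 ≤ nCDF μ v x :=
  setIntegral_nonneg measurableSet_Iic fun t _ => (nPDF_pos hv t).le

theorem nCDF_le_one (hv : 0 < v) (x : ℝ) : nCDF μ v x ≤ 1 :=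
  integral_nPDF (μ := μ) hv ▸
    setIntegral_le_integral (integrable_nPDF μ v) (ae_of_all _ fun t => (nPDF_pos hv t).le)

theorem nCDF_pos (hv : 0 < v) (x : ℝ) : 0 < nCDF μ v x :=
  (nCDF_nonneg hv (x - 1)).trans_lt (strictMono_nCDF hv (sub_one_lt x))

theorem nCDF_lt_one (hv : 0 < v) (x : ℝ) : nCDF μ v x < 1 :=
  (strictMono_nCDF hv (lt_add_one x)).trans_le (nCDF_le_one hv (x + 1))

end

theorem nPDF_zero_one_mul_exp (μ x : ℝ) :
    nPDF 0 1 x * exp (μ * x - μ ^ 2 / 2) = nPDF μ 1 x := by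
  rw [nPDF, nPDF, mul_assoc, ← exp_add]
  congr 2
  ring

noncomputable def betaGap (μ s x : ℝ) : ℝ :=
  (1 - nCDF 0 1 x) * exp (μ * x - μ ^ 2 / 2) - (nCDF μ 1 s - nCDF μ 1 x)

theorem hasDerivAt_betaGap (μ s x : ℝ) :
    HasDerivAt (betaGap μ s) (μ * ((1 - nCDF 0 1 x) * exp (μ * x - μ ^ 2 / 2))) x := by
  have hexp : HasDerivAt (fun x => exp (μ * x - μ ^ 2 / 2)) (exp (μ * x - μ ^ 2 / 2) * μ) x := by
    simpa using (((hasDerivAt_id x).const_mul μ).sub_const (μ ^ 2 / 2)).exp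
  have h := (((hasDerivAt_nCDF 0 1 x).const_sub 1).mul hexp).sub
    ((hasDerivAt_nCDF μ 1 x).const_sub (nCDF μ 1 s))
  refine h.congr_deriv ?_
  rw [← nPDF_zero_one_mul_exp μ x]
  ring

theorem continuous_betaGap (μ s : ℝ) : Continuous (betaGap μ s) :=
  continuous_iff_continuousAt.2 fun x => (hasDerivAt_betaGap μ s x).continuousAt

theorem betaGap_self_pos (μ s : ℝ) : 0 < betaGap μ s s := by
  rw [betaGap, sub_self, sub_zero]
  exact mul_pos (sub_pos.2 (nCDF_lt_one one_pos s)) (exp_pos _)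

section

variable {μ s : ℝ}

theorem betaEquation_iff_betaGap_eq_zero {x : ℝ} (hx : x < s) :
    (1 - nCDF 0 1 x) / (nCDF μ 1 s - nCDF μ 1 x) = nPDF 0 1 x / nPDF μ 1 x ↔
      betaGap μ s x = 0 := by
  have hden : nCDF μ 1 s - nCDF μ 1 x ≠ 0 := (sub_pos.2 (strictMono_nCDF one_pos hx)).ne'
  rw [div_eq_div_iff hden (nPDF_pos one_pos x).ne', ← nPDF_zero_one_mul_exp, betaGap, sub_eq_zero,
    mul_left_comm, mul_right_inj' (nPDF_pos one_pos x).ne']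

theorem not_betaEquation_of_le {x : ℝ} (hx : s ≤ x) :
    ¬ (1 - nCDF 0 1 x) / (nCDF μ 1 s - nCDF μ 1 x) = nPDF 0 1 x / nPDF μ 1 x := by
  have hlhs : (1 - nCDF 0 1 x) / (nCDF μ 1 s - nCDF μ 1 x) ≤ 0 :=
    div_nonpos_of_nonneg_of_nonpos (sub_nonneg.2 (nCDF_le_one one_pos x))
      (sub_nonpos.2 ((strictMono_nCDF one_pos).monotone hx))
  exact (hlhs.trans_lt (div_pos (nPDF_pos one_pos x) (nPDF_pos one_pos x))).ne

theorem strictMono_betaGap (hμ : 0 < μ) : StrictMono (betaGap μ s) :=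
  strictMono_of_deriv_pos fun x => (hasDerivAt_betaGap μ s x).deriv ▸
    mul_pos hμ (mul_pos (sub_pos.2 (nCDF_lt_one one_pos x)) (exp_pos _))

theorem tendsto_betaGap_atBot (hμ : 0 < μ) :
    Tendsto (betaGap μ s) atBot (𝓝 (-nCDF μ 1 s)) := by
  have hexp : Tendsto (fun x => exp (μ * x - μ ^ 2 / 2)) atBot (𝓝 0) :=
    tendsto_exp_atBot.comp (tendsto_atBot_add_const_right _ _ (tendsto_id.const_mul_atBot hμ))
  have h := (((tendsto_nCDF_atBot 0 1).const_sub 1).mul hexp).sub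
    ((tendsto_nCDF_atBot μ 1).const_sub (nCDF μ 1 s))
  rwa [sub_zero, mul_zero, sub_zero, zero_sub] at h

theorem exists_betaGap_eq_zero (hμ : 0 < μ) : ∃ β < s, betaGap μ s β = 0 := by
  have hneg : ∀ᶠ x in atBot, betaGap μ s x < 0 :=
    (tendsto_betaGap_atBot hμ).eventually_lt_const (neg_neg_iff_pos.2 (nCDF_pos one_pos s))
  obtain ⟨x₀, hx₀s, hx₀⟩ := ((eventually_lt_atBot s).and hneg).exists
  obtain ⟨β, hβ, hβ0⟩ := intermediate_value_Icc hx₀s.le (continuous_betaGap μ s).continuousOn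
    ⟨hx₀.le, (betaGap_self_pos μ s).le⟩
  refine ⟨β, hβ.2.lt_of_ne ?_, hβ0⟩
  rintro rfl
  exact (betaGap_self_pos μ β).ne' hβ0

end

/-- Lemma 2: for `v = 1` and `μ > 0`, the equation
`(1 − Φ(x)) / (Φ_{μ,1}(s) − Φ_{μ,1}(x)) = N(x) / N_{μ,1}(x)` has a unique real
solution `β`, and it satisfies `β < s`. -/
theorem unique_solution_eq_one (μ s : ℝ) (hμ : 0 < μ) :
    ∃ β : ℝ,
      (∀ x : ℝ,
        (1 - nCDF 0 1 x) / (nCDF μ 1 s - nCDF μ 1 x) = nPDF 0 1 x / nPDF μ 1 x ↔ x = β) ∧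
      β < s := by
  obtain ⟨β, hβs, hβ⟩ := exists_betaGap_eq_zero (s := s) hμ
  refine ⟨β, fun x => ?_, hβs⟩
  rcases lt_or_ge x s with hx | hx
  · rw [betaEquation_iff_betaGap_eq_zero hx, ← hβ]
    exact (strictMono_betaGap hμ).injective.eq_iff
  · exact iff_of_false (not_betaEquation_of_le hx) fun hxβ => (hβs.trans_le hx).ne' hxβ
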